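/- arXiv:1207.1910 — 2 statements merged into one kernel-verified Lean document; each statement's English description precedes it below -/
import Mathlib

section
/- Let (R, m) be a Noetherian local ring of prime characteristic p > 0, let e ≥ 1, and let ψ : R → R be a p^{-e}-linear map such that ψ(m) is not contained in m. Then there exists a p^{-e}-linear map φ : R → R with φ(1) = 1 (a Frobenius splitting) and φ(m) = R; in particular, m is not compatible with φ. -/
open CategoryTheory IsLocalRing

/-- A `p^{-e}`-linear map on `R`: additive and `φ (r^{p^e} * x) = r * φ x`. -/
def IsPeLinear (p e : ℕ) {R : Type} [CommRing R] (φ : R → R) : Prop :=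
  (∀ x y : R, φ (x + y) = φ x + φ y) ∧ ∀ r x : R, φ (r ^ p ^ e * x) = r * φ x

/-!
Rescaling `ψ` by the inverse of the unit `ψ x` gives a `p^{-e}`-linear map sending some
`x ∈ m` to `1`. Precomposing with multiplication by the unit `a = 1 + (1 - ψ 1)^{p^e} x` corrects
the value at `1` to `(ψ 1) + (1 - ψ 1) ψ x = 1` while still sending `a⁻¹ x ∈ m` to `1`. Once a
`p^{-e}`-linear map sends an element `y` of an ideal `I` to a unit `v`, it maps `I` onto `R`,
since `(z v⁻¹)^{p^e} y ↦ z`.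
-/

namespace IsPeLinear

variable {p e : ℕ} {R : Type} [CommRing R] {φ : R → R}

theorem const_mul (hφ : IsPeLinear p e φ) (b : R) : IsPeLinear p e (fun y => b * φ y) :=
  ⟨fun x y => by simp only [hφ.1, mul_add], fun r x => by simp only [hφ.2, mul_left_comm]⟩

theorem comp_mul (hφ : IsPeLinear p e φ) (c : R) : IsPeLinear p e (fun y => φ (c * y)) :=
  ⟨fun x y => by simp only [mul_add, hφ.1], fun r x => by simp only [mul_left_comm c, hφ.2]⟩

theorem map_one_add (hφ : IsPeLinear p e φ) (c x : R) :
    φ (1 + c ^ p ^ e * x) = φ 1 + c * φ x := by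
  rw [hφ.1, hφ.2]

theorem image_eq_univ_of_isUnit (hφ : IsPeLinear p e φ) {I : Ideal R} {y : R} (hy : y ∈ I)
    (hu : IsUnit (φ y)) : φ '' I = Set.univ :=
  Set.eq_univ_of_forall fun z =>
    ⟨(z * ↑hu.unit⁻¹) ^ p ^ e * y, I.mul_mem_left _ hy, by
      rw [hφ.2, mul_assoc, hu.val_inv_mul, mul_one]⟩

theorem exists_splitting_of_map_eq_one [IsLocalRing R] (hφ : IsPeLinear p e φ) {x : R}
    (hx : x ∈ maximalIdeal R) (hφx : φ x = 1) :
    ∃ φ' : R → R, IsPeLinear p e φ' ∧ φ' 1 = 1 ∧ ∃ y ∈ maximalIdeal R, φ' y = 1 := by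
  set a := 1 + (1 - φ 1) ^ p ^ e * x
  have ha : IsUnit a := by
    have hm : -((1 - φ 1) ^ p ^ e * x) ∈ nonunits R :=
      (mem_maximalIdeal _).mp ((maximalIdeal R).neg_mem ((maximalIdeal R).mul_mem_left _ hx))
    simpa only [sub_neg_eq_add] using isUnit_one_sub_self_of_mem_nonunits _ hm
  refine ⟨fun y => φ (a * y), hφ.comp_mul a, ?_, ↑ha.unit⁻¹ * x,
    (maximalIdeal R).mul_mem_left _ hx, ?_⟩
  · simp only [mul_one, a, hφ.map_one_add, hφx, add_sub_cancel]
  · simp only [← mul_assoc, ha.mul_val_inv, one_mul, hφx]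

end IsPeLinear

theorem exists_splitting_not_compatible_with_maximal_ideal_general
    {R : Type} [CommRing R] [IsLocalRing R]
    (p : ℕ)
    (e : ℕ) (ψ : R → R) (hψ : IsPeLinear p e ψ)
    (hψm : ∃ x ∈ maximalIdeal R, ψ x ∉ maximalIdeal R) :
    ∃ φ : R → R, IsPeLinear p e φ ∧ φ 1 = 1 ∧
      φ '' (maximalIdeal R : Set R) = Set.univ ∧
      ¬ φ '' (maximalIdeal R : Set R) ⊆ (maximalIdeal R : Set R) := by
  obtain ⟨x, hx, hψx⟩ := hψm
  have hu : IsUnit (ψ x) := notMem_maximalIdeal.mp hψx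
  obtain ⟨φ, hφ, hφ1, y, hy, hφy⟩ :=
    (hψ.const_mul ↑hu.unit⁻¹).exists_splitting_of_map_eq_one hx hu.val_inv_mul
  have himage := hφ.image_eq_univ_of_isUnit hy (hφy ▸ isUnit_one)
  refine ⟨φ, hφ, hφ1, himage, fun hsub => ?_⟩
  exact notMem_maximalIdeal.mpr isUnit_one (hsub (himage ▸ Set.mem_univ 1))

/-- If some `p^{-e}`-linear map moves the maximal ideal out of itself, then there is a
Frobenius splitting `φ` with `φ (m) = R`; in particular `m` is not compatible with `φ`. -/
theorem exists_splitting_not_compatible_with_maximal_ideal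
    {R : Type} [CommRing R] [IsLocalRing R] [IsNoetherianRing R]
    (p : ℕ) [Fact p.Prime] [CharP R p]
    (e : ℕ) (he : 1 ≤ e) (ψ : R → R) (hψ : IsPeLinear p e ψ)
    (hψm : ∃ x ∈ maximalIdeal R, ψ x ∉ maximalIdeal R) :
    ∃ φ : R → R, IsPeLinear p e φ ∧ φ 1 = 1 ∧
      φ '' (maximalIdeal R : Set R) = Set.univ ∧
      ¬ φ '' (maximalIdeal R : Set R) ⊆ (maximalIdeal R : Set R) :=
  exists_splitting_not_compatible_with_maximal_ideal_general p e ψ hψ hψm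
end

section
/- Let R be a Noetherian commutative ring of prime characteristic p > 0, let e ≥ 1, and let φ : R → R be a surjective p^{-e}-linear map. Let Q ⊂ R be a prime ideal and n ≥ 1. Then φ(Q) ⊆ Q if and only if φ^{∘n}(Q) ⊆ Q, where φ^{∘n} = φ ∘ φ ∘ … ∘ φ denotes the n-fold composite (which is a p^{-ne}-linear map). -/
open CategoryTheory IsLocalRing

/-!
If `φ^[n]` maps `Q` into itself, so does `φ`: writing `1 = φ^[n-1] u` and `q = p^{e(n-1)}`, the
`p^{-e}`-linearity of `φ` and `p^{-e(n-1)}`-linearity of `φ^[n-1]` give, for `x ∈ Q`,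
`φ x = φ^[n-1] ((φ x)^q * u) = φ^[n] ((φ x ^ (q-1) * u)^{p^e} * x)`, and the argument of `φ^[n]`
lies in `Q`. The converse is immediate.
-/

namespace IsPeLinear

variable {p e : ℕ} {R : Type} [CommRing R] {φ : R → R}

theorem iterate (hφ : IsPeLinear p e φ) (k : ℕ) : IsPeLinear p (e * k) φ^[k] := by
  induction k with
  | zero => exact ⟨fun _ _ => rfl, fun r x => by simp⟩
  | succ k ih =>
    refine ⟨fun x y => ?_, fun r x => ?_⟩
    · simp only [Function.iterate_succ_apply', ih.1, hφ.1]
    · have hpow : r ^ p ^ (e * (k + 1)) = (r ^ p ^ e) ^ p ^ (e * k) := by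
        rw [← pow_mul, ← pow_add, Nat.mul_succ, add_comm]
      rw [Function.iterate_succ_apply', Function.iterate_succ_apply', hpow, ih.2, hφ.2]

theorem exists_iterate_succ_apply_eq (hφ : IsPeLinear p e φ) (hp : p ≠ 0)
    (hsurj : Function.Surjective φ) (k : ℕ) (x : R) :
    ∃ w : R, φ^[k + 1] (w ^ p ^ e * x) = φ x := by
  obtain ⟨u, hu⟩ := hsurj.iterate k 1
  have hq : 1 ≤ p ^ (e * k) := Nat.one_le_pow _ _ (Nat.pos_of_ne_zero hp)
  refine ⟨φ x ^ (p ^ (e * k) - 1) * u, ?_⟩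
  calc φ^[k + 1] ((φ x ^ (p ^ (e * k) - 1) * u) ^ p ^ e * x)
      = φ^[k] (φ x ^ p ^ (e * k) * u) := by
        rw [Function.iterate_succ_apply, hφ.2, mul_right_comm, ← pow_succ,
          Nat.sub_add_cancel hq]
    _ = φ x := by rw [(hφ.iterate k).2, hu, mul_one]

end IsPeLinear

theorem compatible_iff_compatible_iterate_general
    {R : Type} [CommRing R]
    (p : ℕ) [Fact p.Prime]
    (e : ℕ) (φ : R → R) (hφ : IsPeLinear p e φ)
    (hsurj : Function.Surjective φ)
    (Q : Ideal R) (n : ℕ) (hn : 1 ≤ n) :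
    (∀ x ∈ Q, φ x ∈ Q) ↔ (∀ x ∈ Q, φ^[n] x ∈ Q) := by
  refine ⟨fun h => Set.MapsTo.iterate h n, fun h x hx => ?_⟩
  obtain ⟨k, rfl⟩ : ∃ k, n = k + 1 := ⟨n - 1, by omega⟩
  obtain ⟨w, hw⟩ := hφ.exists_iterate_succ_apply_eq (Fact.out : p.Prime).ne_zero hsurj k x
  exact hw ▸ h _ (Q.mul_mem_left _ hx)

/-- A prime is compatible with a surjective `p^{-e}`-linear map iff it is compatible with
its `n`-fold composite. -/
theorem compatible_iff_compatible_iterate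
    {R : Type} [CommRing R] [IsNoetherianRing R]
    (p : ℕ) [Fact p.Prime] [CharP R p]
    (e : ℕ) (he : 1 ≤ e) (φ : R → R) (hφ : IsPeLinear p e φ)
    (hsurj : Function.Surjective φ)
    (Q : Ideal R) (hQ : Q.IsPrime) (n : ℕ) (hn : 1 ≤ n) :
    (∀ x ∈ Q, φ x ∈ Q) ↔ (∀ x ∈ Q, φ^[n] x ∈ Q) :=
  compatible_iff_compatible_iterate_general p e φ hφ hsurj Q n hn
end
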